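/- Let L be a PG-lattice and M be a faithful multiplication PG-lattice L-module with I_M compact. If a proper element N ∈ M is pseudo-primary, then for every K ∈ M with K ≰ rad(N), (N:K) is a primary element of L, and the set {√(N:K) | K ∈ M, K ≰ rad(N)} is a chain of prime elements of L (i.e., each √(N:K) is prime and any two such elements are comparable). -/

import Mathlib

open CompleteLattice

universe u v

/-- A multiplicative lattice: a complete lattice with a commutative, associative
multiplication distributing over arbitrary joins, whose greatest element `⊤` is the
multiplicative identity `1`.  Following the standing assumptions of the paper, we also
require that the lattice is compactly generated, that `1` is compact and that finite
products of compact elements are compact. -/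
class MultiplicativeLattice (L : Type u) extends CompleteLattice L, CommMonoid L where
  mul_sSup : ∀ (a : L) (S : Set L), a * sSup S = ⨆ b ∈ S, a * b
  one_eq_top : (1 : L) = ⊤
  compactlyGenerated : ∀ a : L, a = sSup {c : L | IsCompactElement c ∧ c ≤ a}
  top_compact : IsCompactElement (⊤ : L)
  mul_compact : ∀ a b : L, IsCompactElement a → IsCompactElement b →
    IsCompactElement (a * b)

/-- A lattice module `M` over a multiplicative lattice `L`. -/
class LatticeModule (L : Type u) [MultiplicativeLattice L] (M : Type v)
    extends CompleteLattice M, SMul L M where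
  sSup_smul : ∀ (S : Set L) (A : M), (SupSet.sSup S : L) • A = ⨆ a ∈ S, a • A
  smul_sSup : ∀ (a : L) (S : Set M), a • (sSup S) = ⨆ B ∈ S, a • B
  mul_smul : ∀ (a b : L) (A : M), (a * b) • A = a • b • A
  one_smul : ∀ A : M, (1 : L) • A = A
  bot_smul : ∀ A : M, (⊥ : L) • A = (⊥ : M)

section LDefs

variable {L : Type u} [MultiplicativeLattice L]

/-- The residual `(a : b)` in `L`. -/
def lcolon (a b : L) : L := sSup {x : L | x * b ≤ a}

/-- The radical `√a` of an element of `L`. -/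
def lrad (a : L) : L :=
  sSup {x : L | IsCompactElement x ∧ ∃ n : ℕ, 0 < n ∧ x ^ n ≤ a}

/-- A prime element of `L`: proper, and `a * b ≤ p` implies `a ≤ p` or `b ≤ p`. -/
def IsPrimeL (p : L) : Prop :=
  p < 1 ∧ ∀ a b : L, a * b ≤ p → a ≤ p ∨ b ≤ p

/-- A primary element of `L`: proper, and for compact `a, b`, `a * b ≤ q` implies
`a ≤ q` or `b ^ n ≤ q` for some positive `n`. -/
def IsPrimaryL (q : L) : Prop :=
  q < 1 ∧ ∀ a b : L, IsCompactElement a → IsCompactElement b → a * b ≤ q →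
    a ≤ q ∨ ∃ n : ℕ, 0 < n ∧ b ^ n ≤ q

/-- A principal element of `L` (meet principal and join principal). -/
def IsPrincipalElemL (e : L) : Prop :=
  (∀ a b : L, a ⊓ b * e = (lcolon a e ⊓ b) * e) ∧
  (∀ a b : L, lcolon (a * e ⊔ b) e = lcolon b e ⊔ a)

end LDefs

/-- `L` is a PG-lattice: every element is a join of principal elements. -/
def IsPGLattice (L : Type u) [MultiplicativeLattice L] : Prop :=
  ∀ a : L, a = sSup {p : L | IsPrincipalElemL p ∧ p ≤ a}

section MDefs

variable (L : Type u) {M : Type v} [MultiplicativeLattice L] [LatticeModule L M]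

/-- The residual `(A : B) ∈ L` of two elements of `M`. -/
def colon (A B : M) : L := sSup {x : L | x • B ≤ A}

/-- The residual `(N : a) ∈ M` of an element of `M` by an element of `L`. -/
def mcolon (N : M) (a : L) : M := sSup {X : M | a • X ≤ N}

/-- A prime element of `M`. -/
def IsPrimeM (N : M) : Prop :=
  N < ⊤ ∧ ∀ (a : L) (X : M), a • X ≤ N → X ≤ N ∨ a • (⊤ : M) ≤ N

/-- A primary element of `M`. -/
def IsPrimaryM (N : M) : Prop :=
  N < ⊤ ∧ ∀ (a : L) (X : M), a • X ≤ N →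
    X ≤ N ∨ ∃ n : ℕ, 0 < n ∧ (a ^ n) • (⊤ : M) ≤ N

/-- The radical `rad N` of an element of `M`: the meet of all prime elements above it. -/
def mrad (N : M) : M := sInf {P : M | IsPrimeM L P ∧ N ≤ P}

/-- A pseudo-primary element of `M`. -/
def IsPseudoPrimary (N : M) : Prop :=
  N < ⊤ ∧ ∀ (a : L) (X : M), a • X ≤ N → a ≤ colon L N ⊤ ∨ X ≤ mrad L N

/-- A classical prime element of `M`. -/
def IsClassicalPrime (N : M) : Prop :=
  N < ⊤ ∧ ∀ (a b : L) (K : M), (a * b) • K ≤ N → a • K ≤ N ∨ b • K ≤ N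

/-- A pseudo-classical primary element of `M`. -/
def IsPseudoClassicalPrimary (N : M) : Prop :=
  N < ⊤ ∧ ∀ (a b : L) (K : M), (a * b) • K ≤ N → a • K ≤ N ∨ b • K ≤ mrad L N

/-- A principal element of `M` (meet principal and join principal). -/
def IsPrincipalElem (N : M) : Prop :=
  (∀ (b : L) (B : M), (b ⊓ colon L B N) • N = b • N ⊓ B) ∧
  (∀ (b : L) (B : M), b ⊔ colon L B N = colon L (b • N ⊔ B) N)

/-- The saturation `S_p(N)` of `N` with respect to `p`. -/
def saturation (N : M) (p : L) : M :=
  sSup {X : M | ∃ c : L, ¬ c ≤ p ∧ c • X ≤ N}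

variable (M)

/-- `M` is a PG-lattice `L`-module. -/
def IsPGModule : Prop := ∀ N : M, N = sSup {P : M | IsPrincipalElem L P ∧ P ≤ N}

/-- `M` is a multiplication lattice `L`-module. -/
def IsMultiplicationModule : Prop := ∀ N : M, ∃ a : L, N = a • (⊤ : M)

/-- `M` is a faithful `L`-module. -/
def IsFaithful : Prop := colon L (⊥ : M) (⊤ : M) = (⊥ : L)

/-- `M` is a CG (compactly generated) lattice `L`-module. -/
def IsCGModule : Prop := ∀ N : M, N = sSup {K : M | IsCompactElement K ∧ K ≤ N}

end MDefs

section Aux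
open MultiplicativeLattice LatticeModule
variable {L : Type u} [MultiplicativeLattice L]

lemma lone_eq_top : (1:L) = ⊤ := MultiplicativeLattice.one_eq_top

lemma lmul_sup (a b c : L) : a * (b ⊔ c) = a*b ⊔ a*c := by
  have h := MultiplicativeLattice.mul_sSup a {b, c}
  rw [sSup_pair, iSup_pair] at h
  exact h

lemma lle_one (a : L) : a ≤ 1 := by rw [lone_eq_top]; exact le_top

lemma lmul_mono_right {b c : L} (a : L) (h : b ≤ c) : a*b ≤ a*c := by
  have : a*c = a*(b ⊔ c) := by rw [sup_eq_right.mpr h]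
  rw [this, lmul_sup]; exact le_sup_left

lemma lmul_mono_left {b c : L} (a : L) (h : b ≤ c) : b*a ≤ c*a := by
  rw [mul_comm b a, mul_comm c a]; exact lmul_mono_right a h

lemma lmul_le_left (a b : L) : a * b ≤ a := by
  calc a * b ≤ a * 1 := lmul_mono_right a (lle_one b)
  _ = a := mul_one a

lemma lmul_le_right (a b : L) : a * b ≤ b := by rw [mul_comm]; exact lmul_le_left b a

lemma lmul_bot (a : L) : a * (⊥:L) = ⊥ := by
  have h := MultiplicativeLattice.mul_sSup a ∅
  simpa using h

end Aux
section Aux2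
variable {L : Type u} {M : Type v} [MultiplicativeLattice L] [LatticeModule L M]

lemma msup_smul (a b : L) (X : M) : (a ⊔ b) • X = a•X ⊔ b•X := by
  have h := LatticeModule.sSup_smul {a,b} X
  rw [sSup_pair, iSup_pair] at h; exact h

lemma msmul_sup (a : L) (X Y : M) : a • (X ⊔ Y) = a•X ⊔ a•Y := by
  have h := LatticeModule.smul_sSup a {X,Y}
  rw [sSup_pair, iSup_pair] at h; exact h

lemma msmul_mono_left {a b : L} (h : a ≤ b) (X : M) : a•X ≤ b•X := by
  have h2 : b•X = (a⊔b)•X := by rw [sup_eq_right.mpr h]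
  rw [h2, msup_smul]; exact le_sup_left

lemma msmul_mono_right (a : L) {X Y : M} (h : X ≤ Y) : a•X ≤ a•Y := by
  have h2 : a•Y = a•(X ⊔ Y) := by rw [sup_eq_right.mpr h]
  rw [h2, msmul_sup]; exact le_sup_left

lemma mone_smul (X : M) : (1:L)•X = X := LatticeModule.one_smul X

lemma msmul_le_self (a : L) (X : M) : a•X ≤ X := by
  calc a•X ≤ (1:L)•X := msmul_mono_left (lle_one a) X
  _ = X := mone_smul X

lemma colon_smul_le (A B : M) : colon L A B • B ≤ A := by
  rw [colon, LatticeModule.sSup_smul]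
  exact iSup₂_le fun x hx => hx

lemma le_colon {x : L} {A B : M} (h : x • B ≤ A) : x ≤ colon L A B := le_sSup h

lemma colon_anti {B' B : M} (A : M) (h : B' ≤ B) : colon L A B ≤ colon L A B' :=
  sSup_le fun x hx => le_colon ((msmul_mono_right x h).trans hx)

lemma colon_mono (B : M) {A A' : M} (h : A ≤ A') : colon L A B ≤ colon L A' B :=
  sSup_le fun x hx => le_colon (le_trans hx h)

lemma smul_le_of_le_colon {x : L} {A B : M} (h : x ≤ colon L A B) : x • B ≤ A :=
  (msmul_mono_left h B).trans (colon_smul_le A B)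

lemma lcolon_mul_le (a b : L) : lcolon a b * b ≤ a := by
  rw [lcolon, mul_comm, MultiplicativeLattice.mul_sSup]
  exact iSup₂_le fun x hx => by rw [mul_comm]; exact hx

lemma le_lcolon {x a b : L} (h : x*b ≤ a) : x ≤ lcolon a b := le_sSup h

lemma pow_compact {c : L} (hc : IsCompactElement c) : ∀ n, IsCompactElement (c^n)
  | 0 => by rw [pow_zero, lone_eq_top]; exact MultiplicativeLattice.top_compact
  | n+1 => by rw [pow_succ]; exact MultiplicativeLattice.mul_compact _ _ (pow_compact hc n) hc

lemma exists_compact_not_le {a b : L} (h : ¬ a ≤ b) :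
    ∃ c : L, IsCompactElement c ∧ c ≤ a ∧ ¬ c ≤ b := by
  by_contra hc; push_neg at hc
  apply h
  conv_lhs => rw [MultiplicativeLattice.compactlyGenerated a]
  exact sSup_le fun x hx => hc x hx.1 hx.2

lemma one_le_mem {S : Set L} (hne : S.Nonempty) (hjoin : ∀ x ∈ S, ∀ y ∈ S, x ⊔ y ∈ S)
    (h : (1:L) ≤ sSup S) : ∃ s ∈ S, (1:L) ≤ s := by
  have hc : IsCompactElement (1:L) := by
    rw [lone_eq_top]; exact MultiplicativeLattice.top_compact
  obtain ⟨x, hx, hle⟩ := (isCompactElement_iff_le_of_directed_sSup_le L (1:L)).mp hc S hne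
    (fun x hx y hy => ⟨x ⊔ y, hjoin x hx y hy, le_sup_left, le_sup_right⟩) h
  exact ⟨x, hx, hle⟩

lemma exists_prime_avoiding (a : L) (T : Set L)
    (hTc : ∀ t ∈ T, IsCompactElement t) (hT1 : (1:L) ∈ T)
    (hTm : ∀ s ∈ T, ∀ t ∈ T, s*t ∈ T) (hTa : ∀ t ∈ T, ¬ t ≤ a) :
    ∃ q : L, a ≤ q ∧ IsPrimeL q ∧ ∀ t ∈ T, ¬ t ≤ q := by
  set S : Set L := {x | a ≤ x ∧ ∀ t ∈ T, ¬ t ≤ x} with hS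
  have haS : a ∈ S := ⟨le_rfl, hTa⟩
  obtain ⟨m, ham, hmax⟩ := zorn_le_nonempty₀ S (fun c hcS hchain y hy => by
    refine ⟨sSup c, ⟨le_trans (hcS hy).1 (le_sSup hy), ?_⟩, fun z hz => le_sSup hz⟩
    intro t ht hle
    obtain ⟨x, hx, hlex⟩ := (isCompactElement_iff_le_of_directed_sSup_le L t).mp
      (hTc t ht) c ⟨y, hy⟩ hchain.directedOn hle
    exact (hcS hx).2 t ht hlex) a haS
  have hmS : m ∈ S := hmax.1
  have hm1 : m < 1 := lt_of_le_of_ne (lle_one m) (fun h => hmS.2 1 hT1 (le_of_eq h.symm))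
  have hcprime : ∀ c d : L, IsCompactElement c → IsCompactElement d →
      c*d ≤ m → ¬ c ≤ m → ¬ d ≤ m → False := by
    intro c d hcc hdc hcd hc hd
    have hnot : ∀ e : L, ¬ e ≤ m → ∃ t ∈ T, t ≤ m ⊔ e := by
      intro e he
      by_contra hno; push_neg at hno
      have hmem : m ⊔ e ∈ S := ⟨le_trans hmS.1 le_sup_left, fun t ht hle => hno t ht hle⟩
      exact he (le_trans le_sup_right (hmax.2 hmem le_sup_left))
    obtain ⟨t₁, ht₁, hle₁⟩ := hnot c hc
    obtain ⟨t₂, ht₂, hle₂⟩ := hnot d hd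
    have hprod : t₁ * t₂ ≤ m := by
      calc t₁ * t₂ ≤ (m ⊔ c) * (m ⊔ d) := by
            calc t₁ * t₂ ≤ (m ⊔ c) * t₂ := lmul_mono_left _ hle₁
            _ ≤ (m ⊔ c) * (m ⊔ d) := lmul_mono_right _ hle₂
      _ = (m⊔c)*m ⊔ ((m⊔c)*d) := by rw [lmul_sup]
      _ ≤ m := by
          apply sup_le (lmul_le_right _ _)
          rw [mul_comm, lmul_sup]
          exact sup_le (lmul_le_right _ _) (by rw [mul_comm]; exact hcd)
    exact hmS.2 (t₁*t₂) (hTm t₁ ht₁ t₂ ht₂) hprod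
  refine ⟨m, hmS.1, ⟨hm1, ?_⟩, hmS.2⟩
  intro x y hxy
  by_contra hno; push_neg at hno
  obtain ⟨c, hcc, hcx, hcm⟩ := exists_compact_not_le hno.1
  obtain ⟨d, hdc, hdy, hdm⟩ := exists_compact_not_le hno.2
  exact hcprime c d hcc hdc (le_trans (by
    calc c*d ≤ x*d := lmul_mono_left _ hcx
    _ ≤ x*y := lmul_mono_right _ hdy) hxy) hcm hdm

lemma exists_prime_above {a : L} (ha : ¬ (1:L) ≤ a) : ∃ q, a ≤ q ∧ IsPrimeL q := by
  obtain ⟨q, h1, h2, -⟩ := exists_prime_avoiding a {1}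
    (fun t ht => by rw [Set.mem_singleton_iff] at ht; rw [ht, lone_eq_top]
                    exact MultiplicativeLattice.top_compact)
    rfl
    (fun s hs t ht => by rw [Set.mem_singleton_iff] at hs ht; simp [hs, ht])
    (fun t ht => by rw [Set.mem_singleton_iff] at ht; rw [ht]; exact ha)
  exact ⟨q, h1, h2⟩

end Aux2
section Aux3
variable {L : Type u} {M : Type v} [MultiplicativeLattice L] [LatticeModule L M]

lemma lsup_mul (a b c : L) : (a ⊔ b) * c = a*c ⊔ b*c := by
  rw [mul_comm, lmul_sup, mul_comm c a, mul_comm c b]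

lemma loc (hfaith : IsFaithful L M) (hmul : IsMultiplicationModule L M)
    (hPGM : IsPGModule L M) (hcomp : IsCompactElement (⊤:M)) {m : L} (hm : IsPrimeL m) :
    ∃ c : L, ∃ X : M, IsCompactElement c ∧ ¬ c ≤ m ∧ IsPrincipalElem L X ∧ c • (⊤:M) ≤ X := by
  obtain ⟨t, htsub, htsup⟩ := (isCompactElement_iff_exists_le_sSup_of_le_sSup M _).mp hcomp {P : M | IsPrincipalElem L P ∧ P ≤ ⊤} (le_of_eq (hPGM ⊤))
  by_cases hcase : ∃ X ∈ t, ¬ colon L X ⊤ ≤ m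
  · obtain ⟨X, hXt, hX⟩ := hcase
    obtain ⟨c, hcc, hcle, hcm⟩ := exists_compact_not_le hX
    exact ⟨c, X, hcc, hcm, (htsub hXt).1,
      le_trans (msmul_mono_left hcle ⊤) (colon_smul_le X ⊤)⟩
  · exfalso
    push_neg at hcase
    have htop : (⊤:M) = m • ⊤ := by
      apply le_antisymm _ le_top
      refine le_trans htsup ?_
      apply Finset.sup_le
      intro X hX
      obtain ⟨a, ha⟩ := hmul X
      have haX : a ≤ colon L X ⊤ := le_colon (le_of_eq ha.symm)
      calc (id X : M) = a • ⊤ := ha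
        _ ≤ (colon L X ⊤) • ⊤ := msmul_mono_left haX ⊤
        _ ≤ m • ⊤ := msmul_mono_left (hcase X hX) ⊤
    have main : ∀ s : Finset M, (∀ X ∈ s, IsPrincipalElem L X) →
        ∀ c : L, IsCompactElement c → ¬ c ≤ m → c • (⊤:M) ≤ s.sup id → False := by
      intro s
      haveI := Classical.decEq M
      induction s using Finset.induction_on with
      | empty =>
        intro _ c _ hcm hle
        apply hcm
        simp only [Finset.sup_empty] at hle
        have hc : c ≤ colon L (⊥:M) ⊤ := le_colon (by simpa using hle)
        rw [hfaith] at hc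
        exact le_trans hc bot_le
      | @insert X s hXs ih =>
        intro hprin c hcc hcm hle
        have hXp : IsPrincipalElem L X := hprin X (Finset.mem_insert_self X s)
        have hsub : ∀ Y ∈ s, IsPrincipalElem L Y := fun Y hY =>
          hprin Y (Finset.mem_insert_of_mem hY)
        rw [Finset.sup_insert, id_eq] at hle
        have h1 : c • X ≤ m • X ⊔ s.sup id := by
          calc c • X ≤ c • (⊤:M) := msmul_mono_right c le_top
          _ = m • (c • (⊤:M)) := by
              rw [← LatticeModule.mul_smul, mul_comm, LatticeModule.mul_smul, ← htop]
          _ ≤ m • (X ⊔ s.sup id) := msmul_mono_right m hle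
          _ = m • X ⊔ m • s.sup id := msmul_sup m X (s.sup id)
          _ ≤ m • X ⊔ s.sup id := sup_le_sup_left (msmul_le_self m (s.sup id)) _
        have h2 : c ≤ m ⊔ colon L (s.sup id) X := by
          rw [hXp.2 m (s.sup id)]
          exact le_colon h1
        have h3 : ¬ colon L (s.sup id) X ≤ m := fun hco =>
          hcm (le_trans h2 (sup_le le_rfl hco))
        obtain ⟨d, hdc, hdle, hdm⟩ := exists_compact_not_le h3
        refine ih hsub (c*d) (MultiplicativeLattice.mul_compact c d hcc hdc)
          (fun hcd => ((hm.2 c d hcd).elim hcm hdm)) ?_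
        calc (c*d) • (⊤:M) = d • (c • ⊤) := by
              rw [mul_comm, LatticeModule.mul_smul]
        _ ≤ d • (X ⊔ s.sup id) := msmul_mono_right d hle
        _ = d • X ⊔ d • s.sup id := msmul_sup d X (s.sup id)
        _ ≤ s.sup id := by
            apply sup_le _ (msmul_le_self d (s.sup id))
            exact le_trans (msmul_mono_left hdle X) (colon_smul_le (s.sup id) X)
    refine main t (fun X hX => (htsub hX).1) 1
      (by rw [lone_eq_top]; exact MultiplicativeLattice.top_compact)
      (fun h1 => hm.1.not_ge h1) (by rw [mone_smul]; exact htsup)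

lemma cancel (hfaith : IsFaithful L M) (hmul : IsMultiplicationModule L M)
    (hPGM : IsPGModule L M) (hcomp : IsCompactElement (⊤:M)) {z y : L}
    (h : z • (⊤:M) ≤ y • ⊤) : z ≤ y := by
  conv_lhs => rw [MultiplicativeLattice.compactlyGenerated z]
  apply _root_.sSup_le
  rintro x ⟨hxc, hxz⟩
  by_contra hxy
  have hprop : ¬ (1:L) ≤ lcolon y x := by
    intro h1
    obtain ⟨s, hs, hles⟩ := one_le_mem (S := {t : L | t*x ≤ y})
      ⟨⊥, show (⊥:L)*x ≤ y by rw [mul_comm, lmul_bot]; exact bot_le⟩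
      (fun u hu v hv => show (u ⊔ v)*x ≤ y by
        rw [lsup_mul]; exact sup_le hu hv) h1
    refine hxy ?_
    calc x = 1*x := (one_mul x).symm
    _ ≤ s*x := lmul_mono_left x hles
    _ ≤ y := hs
  obtain ⟨m, hym, hm⟩ := exists_prime_above hprop
  obtain ⟨c, X, hcc, hcm, hXp, hcX⟩ := loc hfaith hmul hPGM hcomp hm
  have hann : (colon L (⊥:M) X) * c ≤ (⊥:L) := by
    rw [← hfaith]
    apply le_colon
    calc ((colon L (⊥:M) X) * c) • (⊤:M) = (colon L (⊥:M) X) • (c • ⊤) :=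
          LatticeModule.mul_smul _ _ _
    _ ≤ (colon L (⊥:M) X) • X := msmul_mono_right _ hcX
    _ ≤ ⊥ := colon_smul_le ⊥ X
  have hstep : x * c ≤ y ⊔ colon L (⊥:M) X := by
    have hXle : (x*c) • X ≤ y • X := by
      calc (x*c)•X ≤ (x*c)•(⊤:M) := msmul_mono_right _ le_top
      _ = c • (x • ⊤) := by rw [mul_comm, LatticeModule.mul_smul]
      _ ≤ c • (z • ⊤) := msmul_mono_right c (msmul_mono_left hxz ⊤)
      _ ≤ c • (y • ⊤) := msmul_mono_right c h
      _ = y • (c • ⊤) := by rw [← LatticeModule.mul_smul, mul_comm, LatticeModule.mul_smul]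
      _ ≤ y • X := msmul_mono_right y hcX
    have hjp := hXp.2 y (⊥:M)
    rw [sup_bot_eq] at hjp
    rw [hjp]
    exact le_colon hXle
  have hfin : (c*c) * x ≤ y := by
    calc (c*c)*x = (x*c)*c := by rw [mul_comm (c*c) x, ← mul_assoc]
    _ ≤ (y ⊔ colon L (⊥:M) X)*c := lmul_mono_left c hstep
    _ = y*c ⊔ (colon L (⊥:M) X)*c := lsup_mul _ _ _
    _ ≤ y ⊔ (⊥:L) := sup_le_sup (lmul_le_left y c) hann
    _ = y := sup_bot_eq y
  have hccm : c*c ≤ m := le_trans (le_lcolon hfin) hym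
  rcases hm.2 c c hccm with h'|h' <;> exact hcm h'

end Aux3
section Aux4
variable {L : Type u} {M : Type v} [MultiplicativeLattice L] [LatticeModule L M]

lemma eq_colon_top_smul (hmul : IsMultiplicationModule L M) (X : M) :
    X = colon L X ⊤ • (⊤:M) := by
  obtain ⟨a, ha⟩ := hmul X
  apply le_antisymm
  · calc X = a • ⊤ := ha
    _ ≤ colon L X ⊤ • ⊤ := msmul_mono_left (le_colon (le_of_eq ha.symm)) ⊤
  · exact colon_smul_le X ⊤

lemma pow_le_prime {q d : L} (hq : IsPrimeL q) : ∀ n : ℕ, 0 < n → d^n ≤ q → d ≤ q := by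
  intro n
  induction n with
  | zero => intro h; exact absurd h (lt_irrefl 0)
  | succ n ih =>
    intro _ h
    rcases Nat.eq_zero_or_pos n with h0 | hpos
    · subst h0; rwa [pow_one] at h
    · rw [pow_succ] at h
      rcases hq.2 _ _ h with h1 | h1
      · exact ih hpos h1
      · exact h1

lemma lrad_le_prime {a q : L} (hq : IsPrimeL q) (haq : a ≤ q) : lrad a ≤ q := by
  apply _root_.sSup_le
  rintro x ⟨hxc, n, hn, hxn⟩
  exact pow_le_prime hq n hn (le_trans hxn haq)

lemma primeM_of_primeL (hfaith : IsFaithful L M) (hmul : IsMultiplicationModule L M)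
    (hPGM : IsPGModule L M) (hcomp : IsCompactElement (⊤:M)) {q : L} (hq : IsPrimeL q) :
    IsPrimeM L (q • (⊤:M)) := by
  constructor
  · apply lt_of_le_of_ne le_top
    intro heq
    have h1 : (1:L) ≤ q := cancel hfaith hmul hPGM hcomp
      (by rw [mone_smul]; exact le_of_eq heq.symm)
    exact hq.1.not_ge h1
  · intro a X haX
    obtain ⟨x, hx⟩ := hmul X
    have h1 : (a*x) • (⊤:M) ≤ q • ⊤ := by
      rw [LatticeModule.mul_smul, ← hx]; exact haX
    rcases hq.2 a x (cancel hfaith hmul hPGM hcomp h1) with h2 | h2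
    · exact Or.inr (msmul_mono_left h2 ⊤)
    · exact Or.inl (by rw [hx]; exact msmul_mono_left h2 ⊤)

lemma colon_top_primeL {P : M} (hP : IsPrimeM L P) : IsPrimeL (colon L P ⊤) := by
  constructor
  · apply lt_of_le_of_ne (lle_one _)
    intro heq
    have h2 : (⊤:M) ≤ P := by
      calc (⊤:M) = (1:L) • ⊤ := (mone_smul ⊤).symm
      _ ≤ colon L P ⊤ • ⊤ := msmul_mono_left (ge_of_eq heq) ⊤
      _ ≤ P := colon_smul_le P ⊤
    exact hP.1.not_ge h2
  · intro a b hab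
    have h1 : a • (b • (⊤:M)) ≤ P := by
      rw [← LatticeModule.mul_smul]; exact smul_le_of_le_colon hab
    rcases hP.2 a (b • ⊤) h1 with h2 | h2
    · exact Or.inr (le_colon h2)
    · exact Or.inl (le_colon h2)

lemma mrad_le_qtop (hfaith : IsFaithful L M) (hmul : IsMultiplicationModule L M)
    (hPGM : IsPGModule L M) (hcomp : IsCompactElement (⊤:M)) {N : M} {q : L}
    (hq : IsPrimeL q) (hge : colon L N ⊤ ≤ q) : mrad L N ≤ q • ⊤ :=
  sInf_le ⟨primeM_of_primeL hfaith hmul hPGM hcomp hq, by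
    calc N = colon L N ⊤ • ⊤ := eq_colon_top_smul hmul N
    _ ≤ q • ⊤ := msmul_mono_left hge ⊤⟩

lemma ptop_le_mrad (N : M) : lrad (colon L N ⊤) • (⊤:M) ≤ mrad L N := by
  apply _root_.le_sInf
  rintro P ⟨hP, hNP⟩
  have h1 : colon L N ⊤ ≤ colon L P ⊤ := colon_mono ⊤ hNP
  have h2 : lrad (colon L N ⊤) ≤ colon L P ⊤ := lrad_le_prime (colon_top_primeL hP) h1
  exact le_trans (msmul_mono_left h2 ⊤) (colon_smul_le P ⊤)

lemma le_lrad_of_all_primes {a d : L} (hd : IsCompactElement d) (ha : ¬ (1:L) ≤ a)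
    (h : ∀ q : L, IsPrimeL q → a ≤ q → d ≤ q) : d ≤ lrad a := by
  by_contra hdr
  have hpow : ∀ n : ℕ, ¬ d^n ≤ a := by
    intro n hn
    rcases Nat.eq_zero_or_pos n with h0 | hpos
    · subst h0; rw [pow_zero] at hn; exact ha hn
    · exact hdr (le_sSup ⟨hd, n, hpos, hn⟩)
  obtain ⟨q, haq, hq, havoid⟩ := exists_prime_avoiding a {x : L | ∃ n : ℕ, x = d^n}
    (by rintro t ⟨n, rfl⟩; exact pow_compact hd n)
    ⟨0, (pow_zero d).symm⟩
    (by rintro s ⟨i, rfl⟩ t ⟨j, rfl⟩; exact ⟨i+j, (pow_add d i j).symm⟩)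
    (by rintro t ⟨n, rfl⟩; exact hpow n)
  exact havoid d ⟨1, (pow_one d).symm⟩ (h q hq haq)

end Aux4
theorem stmt10 {L : Type u} {M : Type v} [MultiplicativeLattice L] [LatticeModule L M]
    (hPG : IsPGLattice L) (hfaith : IsFaithful L M)
    (hmul : IsMultiplicationModule L M) (hPGM : IsPGModule L M)
    (hcomp : IsCompactElement (⊤ : M))
    (N : M) (hN : IsPseudoPrimary L N) :
    (∀ K : M, ¬ K ≤ mrad L N → IsPrimaryL (colon L N K)) ∧
    (∀ K : M, ¬ K ≤ mrad L N → IsPrimeL (lrad (colon L N K))) ∧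
    (∀ K₁ K₂ : M, ¬ K₁ ≤ mrad L N → ¬ K₂ ≤ mrad L N →
      lrad (colon L N K₁) ≤ lrad (colon L N K₂) ∨
        lrad (colon L N K₂) ≤ lrad (colon L N K₁)) := by
  obtain ⟨hNtop, hps⟩ := hN
  set nc := colon L N ⊤ with hnc
  have hN_le_mrad : N ≤ mrad L N := _root_.le_sInf fun P hP => hP.2
  have hnc_smul : nc • (⊤:M) ≤ N := colon_smul_le N ⊤
  have hncproper : ¬ (1:L) ≤ nc := by
    intro h1
    apply hNtop.not_ge
    calc (⊤:M) = (1:L) • ⊤ := (mone_smul ⊤).symm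
    _ ≤ nc • ⊤ := msmul_mono_left h1 ⊤
    _ ≤ N := hnc_smul
  have hncK : ∀ K : M, nc ≤ colon L N K := fun K => colon_anti N le_top
  have hmrad_q : ∀ q : L, IsPrimeL q → nc ≤ q → mrad L N ≤ q • ⊤ :=
    fun q hq h => mrad_le_qtop hfaith hmul hPGM hcomp hq h
  have hcan : ∀ {z y : L}, z • (⊤:M) ≤ y • (⊤:M) → z ≤ y :=
    fun h => cancel hfaith hmul hPGM hcomp h
  set p := lrad nc with hp
  have hptop : p • (⊤:M) ≤ mrad L N := ptop_le_mrad N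
  have lemE : ∀ d : L, IsCompactElement d → ∀ j : ℕ, 0 < j →
      (d^j) • (⊤:M) ≤ mrad L N → d ≤ p := by
    intro d hd j hj hle
    apply le_lrad_of_all_primes hd hncproper
    intro q hq haq
    exact pow_le_prime hq j hj (hcan (le_trans hle (hmrad_q q hq haq)))
  have hproper : ∀ K : M, ¬ K ≤ mrad L N → colon L N K < 1 := by
    intro K hK
    apply lt_of_le_of_ne (lle_one _)
    intro heq
    apply hK
    have h1 : (1:L) ≤ colon L N K := ge_of_eq heq
    obtain ⟨s, hs, hles⟩ := one_le_mem (S := {x : L | x • K ≤ N})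
      ⟨⊥, by rw [Set.mem_setOf_eq, LatticeModule.bot_smul]; exact bot_le⟩
      (fun u hu v hv => by rw [Set.mem_setOf_eq, msup_smul]; exact sup_le hu hv) h1
    have h2 : K ≤ N := by
      calc K = (1:L) • K := (mone_smul K).symm
      _ ≤ s • K := msmul_mono_left hles K
      _ ≤ N := hs
    exact le_trans h2 hN_le_mrad
  have key : ∀ K : M, ¬ K ≤ mrad L N → ∀ b : L, IsCompactElement b → b • K ≤ mrad L N →
      ∃ n : ℕ, 0 < n ∧ b^n ≤ colon L N K := by
    intro K hK b hb hbK
    by_cases hbnc : ∃ n : ℕ, 0 < n ∧ b^n ≤ nc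
    · obtain ⟨n, hn, hle⟩ := hbnc
      exact ⟨n, hn, le_trans hle (hncK K)⟩
    · exfalso
      push_neg at hbnc
      set k := colon L K ⊤ with hk
      have hKk : K = k • ⊤ := eq_colon_top_smul hmul K
      have hkp : ¬ k ≤ p := by
        intro h
        exact hK (by rw [hKk]; exact le_trans (msmul_mono_left h ⊤) hptop)
      obtain ⟨k', hk'c, hk'k, hk'p⟩ := exists_compact_not_le hkp
      have hk'pow : ∀ j : ℕ, 0 < j → ¬ k'^j ≤ nc := fun j hj hle =>
        hk'p (le_sSup ⟨hk'c, j, hj, hle⟩)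
      have havoidnc : ∀ t : L, t ∈ {x : L | ∃ i j : ℕ, x = b^i * k'^j} → ¬ t ≤ nc := by
        rintro t ⟨i, j, rfl⟩ hle
        rcases Nat.eq_zero_or_pos i with hi | hi
        · subst hi
          rw [pow_zero, one_mul] at hle
          rcases Nat.eq_zero_or_pos j with hj | hj
          · subst hj; rw [pow_zero] at hle; exact hncproper hle
          · exact hk'pow j hj hle
        · have hsm : (b^i) • ((k'^j) • (⊤:M)) ≤ N := by
            rw [← LatticeModule.mul_smul]
            exact le_trans (msmul_mono_left hle ⊤) hnc_smul
          rcases hps (b^i) ((k'^j) • ⊤) hsm with h1 | h1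
          · exact hbnc i hi h1
          · rcases Nat.eq_zero_or_pos j with hj | hj
            · subst hj
              rw [pow_zero, mone_smul] at h1
              exact hK (le_trans le_top h1)
            · exact hk'p (lemE k' hk'c j hj h1)
      obtain ⟨q, hncq, hq, havoid⟩ := exists_prime_avoiding nc
        {x : L | ∃ i j : ℕ, x = b^i * k'^j}
        (by rintro t ⟨i, j, rfl⟩
            exact MultiplicativeLattice.mul_compact _ _ (pow_compact hb i) (pow_compact hk'c j))
        ⟨0, 0, by simp⟩
        (by rintro s ⟨i1, j1, rfl⟩ t' ⟨i2, j2, rfl⟩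
            exact ⟨i1+i2, j1+j2, by rw [pow_add, pow_add]
                                    exact mul_mul_mul_comm _ _ _ _⟩)
        havoidnc
      have h1 : b * k ≤ q := hcan (by
        rw [LatticeModule.mul_smul, ← hKk]
        exact le_trans hbK (hmrad_q q hq hncq))
      rcases hq.2 b k h1 with h2 | h2
      · exact havoid b ⟨1, 0, by simp⟩ h2
      · exact havoid k' ⟨0, 1, by simp⟩ (le_trans hk'k h2)
  have hprimep : ∀ K₀ : M, ¬ K₀ ≤ mrad L N → IsPrimeL p := by
    intro K₀ hK₀
    have hproper_p : p < 1 := by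
      obtain ⟨q, haq, hq⟩ := exists_prime_above hncproper
      exact lt_of_le_of_lt (lrad_le_prime hq haq) hq.1
    refine ⟨hproper_p, ?_⟩
    have hcpt : ∀ c d : L, IsCompactElement c → IsCompactElement d →
        c*d ≤ p → ¬ c ≤ p → ¬ d ≤ p → False := by
      intro c d hcc hdc hcd hc hd
      have hcpow : ∀ i, 0 < i → ¬ c^i ≤ nc := fun i hi hle => hc (le_sSup ⟨hcc, i, hi, hle⟩)
      have hdpow : ∀ j, 0 < j → ¬ d^j ≤ nc := fun j hj hle => hd (le_sSup ⟨hdc, j, hj, hle⟩)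
      have havoidnc : ∀ t : L, t ∈ {x : L | ∃ i j : ℕ, x = c^i * d^j} → ¬ t ≤ nc := by
        rintro t ⟨i, j, rfl⟩ hle
        rcases Nat.eq_zero_or_pos i with hi | hi
        · subst hi
          rw [pow_zero, one_mul] at hle
          rcases Nat.eq_zero_or_pos j with hj | hj
          · subst hj; rw [pow_zero] at hle; exact hncproper hle
          · exact hdpow j hj hle
        · have hsm : (c^i) • ((d^j) • (⊤:M)) ≤ N := by
            rw [← LatticeModule.mul_smul]
            exact le_trans (msmul_mono_left hle ⊤) hnc_smul
          rcases hps (c^i) ((d^j) • ⊤) hsm with h1 | h1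
          · exact hcpow i hi h1
          · rcases Nat.eq_zero_or_pos j with hj | hj
            · subst hj
              rw [pow_zero, mone_smul] at h1
              exact hK₀ (le_trans le_top h1)
            · exact hd (lemE d hdc j hj h1)
      obtain ⟨q, hncq, hq, havoid⟩ := exists_prime_avoiding nc
        {x : L | ∃ i j : ℕ, x = c^i * d^j}
        (by rintro t ⟨i, j, rfl⟩
            exact MultiplicativeLattice.mul_compact _ _ (pow_compact hcc i) (pow_compact hdc j))
        ⟨0, 0, by simp⟩
        (by rintro s ⟨i1, j1, rfl⟩ t' ⟨i2, j2, rfl⟩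
            exact ⟨i1+i2, j1+j2, by rw [pow_add, pow_add]
                                    exact mul_mul_mul_comm _ _ _ _⟩)
        havoidnc
      exact havoid (c*d) ⟨1, 1, by rw [pow_one, pow_one]⟩
        (le_trans hcd (lrad_le_prime hq hncq))
    intro a b hab
    by_contra hno; push_neg at hno
    obtain ⟨c, hcc, hca, hcp⟩ := exists_compact_not_le hno.1
    obtain ⟨d, hdc, hdb, hdp⟩ := exists_compact_not_le hno.2
    exact hcpt c d hcc hdc
      (le_trans (le_trans (lmul_mono_left _ hca) (lmul_mono_right _ hdb)) hab) hcp hdp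
  have hlradeq : ∀ K : M, ¬ K ≤ mrad L N → lrad (colon L N K) = p := by
    intro K hK
    apply le_antisymm
    · apply _root_.sSup_le
      rintro x ⟨hxc, n, hn, hxn⟩
      have hsm : (x^n) • K ≤ N := smul_le_of_le_colon hxn
      rcases hps (x^n) K hsm with h1 | h1
      · exact le_sSup ⟨hxc, n, hn, h1⟩
      · exact absurd h1 hK
    · apply _root_.sSup_le
      rintro x ⟨hxc, n, hn, hxn⟩
      exact le_sSup ⟨hxc, n, hn, le_trans hxn (hncK K)⟩
  refine ⟨?_, ?_, ?_⟩
  · intro K hK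
    refine ⟨hproper K hK, ?_⟩
    intro a b hac hbc hab
    have hsm : a • (b • K) ≤ N := by
      rw [← LatticeModule.mul_smul]
      exact smul_le_of_le_colon hab
    rcases hps a (b • K) hsm with h1 | h1
    · exact Or.inl (le_trans h1 (hncK K))
    · exact Or.inr (key K hK b hbc h1)
  · intro K hK
    rw [hlradeq K hK]
    exact hprimep K hK
  · intro K₁ K₂ h1 h2
    left
    rw [hlradeq K₁ h1, hlradeq K₂ h2]
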